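/- arXiv:1605.05463 — 3 statements merged into one kernel-verified Lean document; each statement's English description precedes it below -/
import Mathlib

section
/- Let m, n be coprime natural numbers and G any group satisfying aᵐbᵐ = bᵐaᵐ and aⁿbⁿ = bⁿaⁿ for all a, b ∈ G. Then the set T(G) of torsion elements of G is a normal abelian subgroup of G. -/
/-!
Write `m`-th and `n`-th powers as `bᵐ` and `aⁿ`. Any torsion element `x` splits as `x = y * z`
with `y, z` powers of `x`, the order of `y` built from primes dividing `m` and the order of `z`
prime to `m`. As these orders are prime to `n` and to `m` respectively, `y` is an `n`-th power
and `z` an `m`-th power. Two such factors `aⁿ` and `bᵐ` commute: their commutator `c`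
commutes with both (conjugates of `m`-th powers are `m`-th powers), so `c` is killed by the
coprime orders of `aⁿ` and `bᵐ`. Hence all torsion elements commute, and a set of pairwise
commuting elements of finite order closed under conjugation is a normal subgroup.
-/

theorem Nat.coprime_div_gcd_pow_self {k : ℕ} (m : ℕ) (hk : k ≠ 0) :
    (k / k.gcd (m ^ k)).Coprime m := by
  refine Nat.coprime_of_dvd fun p hp hpe hpm => ?_
  have hpk : p ^ k.factorization p ∣ k.gcd (m ^ k) :=
    Nat.dvd_gcd (Nat.ordProj_dvd k p)
      ((pow_dvd_pow p (Nat.factorization_lt p hk).le).trans (pow_dvd_pow_of_dvd hpm k))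
  have hsucc : p ^ (k.factorization p + 1) ∣ k := by
    simpa only [← pow_succ, Nat.mul_div_cancel' (Nat.gcd_dvd_left k (m ^ k))] using
      mul_dvd_mul hpk hpe
  exact Nat.pow_succ_factorization_not_dvd hk hp hsucc

section Group

open scoped commutatorElement

variable {G : Type*} [Group G]

theorem exists_mul_eq_of_pow_mul_eq_one {x : G} {a b : ℕ} (hab : a.Coprime b)
    (hx : x ^ (a * b) = 1) : ∃ y z : G, y * z = x ∧ orderOf y ∣ a ∧ orderOf z ∣ b := by
  obtain ⟨s, t, hst⟩ := Nat.isCoprime_iff_coprime.mpr hab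
  have hx' : x ^ ((a : ℤ) * b) = 1 := by exact_mod_cast hx
  refine ⟨x ^ (t * b), x ^ (s * a), ?_, ?_, ?_⟩
  · rw [← zpow_add, show t * b + s * a = 1 by linarith, zpow_one]
  · refine orderOf_dvd_of_pow_eq_one ?_
    rw [← zpow_natCast, ← zpow_mul, show t * b * a = (a * b : ℤ) * t by ring, zpow_mul, hx',
      one_zpow]
  · refine orderOf_dvd_of_pow_eq_one ?_
    rw [← zpow_natCast, ← zpow_mul, show s * a * b = (a * b : ℤ) * s by ring, zpow_mul, hx',
      one_zpow]

theorem exists_pow_eq_of_coprime_orderOf {x : G} {n : ℕ} (h : n.Coprime (orderOf x)) :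
    ∃ a : G, a ^ n = x := by
  obtain ⟨j, hj⟩ := exists_pow_eq_self_of_coprime h
  exact ⟨x ^ j, by rwa [← pow_mul, mul_comm, pow_mul]⟩

theorem IsOfFinOrder.exists_pow_mul_pow {m n : ℕ} (hmn : m.Coprime n) {x : G}
    (hx : IsOfFinOrder x) : ∃ a b : G, a ^ n * b ^ m = x ∧
      orderOf (a ^ n) ∣ m ^ orderOf x ∧ (orderOf (b ^ m)).Coprime m := by
  set k := orderOf x
  have he : (k / k.gcd (m ^ k)).Coprime m := Nat.coprime_div_gcd_pow_self m hx.orderOf_pos.ne'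
  have hde : (k.gcd (m ^ k)).Coprime (k / k.gcd (m ^ k)) :=
    (he.pow_right k).symm.coprime_dvd_left (Nat.gcd_dvd_right k (m ^ k))
  obtain ⟨y, z, rfl, hy, hz⟩ := exists_mul_eq_of_pow_mul_eq_one hde
    (by rw [Nat.mul_div_cancel' (Nat.gcd_dvd_left k (m ^ k)), pow_orderOf_eq_one])
  have hym : orderOf y ∣ m ^ k := hy.trans (Nat.gcd_dvd_right k (m ^ k))
  have hzm : (orderOf z).Coprime m := he.coprime_dvd_left hz
  obtain ⟨a, rfl⟩ :=
    exists_pow_eq_of_coprime_orderOf ((hmn.symm.pow_right k).coprime_dvd_right hym)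
  obtain ⟨b, rfl⟩ := exists_pow_eq_of_coprime_orderOf hzm.symm
  exact ⟨a, b, rfl, hym, hzm⟩

theorem commutatorElement_pow_left_of_commute {g x : G} (h : Commute g ⁅g, x⁆) (k : ℕ) :
    ⁅g ^ k, x⁆ = ⁅g, x⁆ ^ k := by
  induction k with
  | zero => simp
  | succ k ih =>
    calc ⁅g ^ (k + 1), x⁆ = g * ⁅g ^ k, x⁆ * (x * g⁻¹ * x⁻¹) := by
          simp only [commutatorElement_def, pow_succ']; group
      _ = ⁅g, x⁆ ^ k * ⁅g, x⁆ := by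
          rw [ih, ← mul_assoc, (h.pow_right k).eq, mul_assoc, commutatorElement_def]; group
      _ = ⁅g, x⁆ ^ (k + 1) := (pow_succ _ _).symm

theorem commutatorElement_pow_orderOf_left {g x : G} (h : Commute g ⁅g, x⁆) :
    ⁅g, x⁆ ^ orderOf g = 1 := by
  rw [← commutatorElement_pow_left_of_commute h, pow_orderOf_eq_one, commutatorElement_one_left]

theorem commute_of_commute_commutatorElement_of_coprime {u v : G} (hu : Commute u ⁅u, v⁆)
    (hv : Commute v ⁅u, v⁆) (h : (orderOf u).Coprime (orderOf v)) : Commute u v := by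
  have hcu : ⁅u, v⁆ ^ orderOf u = 1 := commutatorElement_pow_orderOf_left hu
  have hcv : ⁅u, v⁆ ^ orderOf v = 1 := by
    rw [← commutatorElement_inv, Commute.inv_right_iff] at hv
    rw [← inv_eq_one, ← inv_pow, commutatorElement_inv]
    exact commutatorElement_pow_orderOf_left hv
  have hc : orderOf ⁅u, v⁆ ∣ 1 :=
    h ▸ Nat.dvd_gcd (orderOf_dvd_of_pow_eq_one hcu) (orderOf_dvd_of_pow_eq_one hcv)
  exact commutatorElement_eq_one_iff_commute.mp (orderOf_eq_one_iff.mp (Nat.dvd_one.mp hc))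

variable {m n : ℕ}

theorem commute_pow_commutatorElement (hm : ∀ a b : G, Commute (a ^ m) (b ^ m)) (g b : G) :
    Commute (b ^ m) ⁅g, b ^ m⁆ := by
  rw [commutatorElement_def, ← conj_pow]
  exact (hm b _).mul_right (Commute.refl _).inv_right

theorem commute_pow_of_coprime_orderOf (hm : ∀ a b : G, Commute (a ^ m) (b ^ m))
    (hn : ∀ a b : G, Commute (a ^ n) (b ^ n)) {a b : G}
    (h : (orderOf (a ^ n)).Coprime (orderOf (b ^ m))) : Commute (a ^ n) (b ^ m) := by
  refine commute_of_commute_commutatorElement_of_coprime ?_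
    (commute_pow_commutatorElement hm (a ^ n) b) h
  rw [← commutatorElement_inv]
  exact (commute_pow_commutatorElement hn _ _).inv_right

theorem IsOfFinOrder.commute (hmn : m.Coprime n) (hm : ∀ a b : G, Commute (a ^ m) (b ^ m))
    (hn : ∀ a b : G, Commute (a ^ n) (b ^ n)) {x y : G} (hx : IsOfFinOrder x)
    (hy : IsOfFinOrder y) : Commute x y := by
  obtain ⟨a₁, b₁, rfl, ha₁, hb₁⟩ := hx.exists_pow_mul_pow hmn
  obtain ⟨a₂, b₂, rfl, ha₂, hb₂⟩ := hy.exists_pow_mul_pow hmn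
  have h₁₂ := commute_pow_of_coprime_orderOf hm hn
    ((hb₂.pow_right _).symm.coprime_dvd_left ha₁)
  have h₂₁ := commute_pow_of_coprime_orderOf hm hn
    ((hb₁.pow_right _).symm.coprime_dvd_left ha₂)
  exact ((hn a₁ a₂).mul_right h₁₂).mul_left (h₂₁.symm.mul_right (hm b₁ b₂))

end Group

theorem torsion_is_normal_abelian_subgroup (G : Type*) [Group G]
    (m n : ℕ) (hmn : Nat.Coprime m n)
    (hm : ∀ a b : G, a ^ m * b ^ m = b ^ m * a ^ m)
    (hn : ∀ a b : G, a ^ n * b ^ n = b ^ n * a ^ n) :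
    ∃ T : Subgroup G, (∀ x : G, x ∈ T ↔ IsOfFinOrder x) ∧ T.Normal ∧
      ∀ x y : G, x ∈ T → y ∈ T → x * y = y * x := by
  have hcomm {x y : G} : IsOfFinOrder x → IsOfFinOrder y → Commute x y :=
    IsOfFinOrder.commute hmn hm hn
  let T : Subgroup G :=
    { carrier := {x | IsOfFinOrder x}
      one_mem' := IsOfFinOrder.one
      mul_mem' := fun hx hy => (hcomm hx hy).isOfFinOrder_mul hx hy
      inv_mem' := IsOfFinOrder.inv }
  refine ⟨T, fun _ => Iff.rfl, ⟨fun x hx g => ?_⟩, fun _ _ hx hy => (hcomm hx hy).eq⟩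
  exact (MulAut.conj g).toMonoidHom.isOfFinOrder hx
end

section
/- Let m, n be coprime natural numbers and G any group satisfying aᵐbᵐ = bᵐaᵐ and aⁿbⁿ = bⁿaⁿ for all a, b ∈ G. If p and q are distinct primes, a ∈ G has order a power of p, and b ∈ G has order a power of q, then ab = ba. -/
/-!
An element of order `pᵅ` is a `k`-th power whenever `p ∤ k`, and `p` cannot divide both of the
coprime `m, n`; so `a = cᵏ` and `b = dˡ` with `k, l ∈ {m, n}`. Then `b a b⁻¹ = (b c b⁻¹)ᵏ` commutes
with `a`, so `⁅b, a⁆ = (b a b⁻¹) a⁻¹` is a product of commuting elements of order `|a|` and its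
order divides `|a|`; symmetrically its inverse `⁅a, b⁆` has order dividing `|b|`. As `|a|` and
`|b|` are coprime, `⁅b, a⁆ = 1`.
-/

theorem Nat.Coprime.coprime_pow_or_coprime_pow {m n p : ℕ} (hmn : m.Coprime n) (hp : p.Prime)
    (α : ℕ) : m.Coprime (p ^ α) ∨ n.Coprime (p ^ α) := by
  by_cases hpm : p ∣ m
  · refine .inr (Nat.Coprime.pow_right α ?_)
    exact (hp.coprime_iff_not_dvd.mpr fun hpn =>
      hp.ne_one (Nat.eq_one_of_dvd_coprimes hmn hpm hpn)).symm
  · exact .inl (Nat.Coprime.pow_right α (hp.coprime_iff_not_dvd.mpr hpm).symm)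

section PowCommute

open scoped commutatorElement

variable {G : Type*} [Group G]

theorem orderOf_commutatorElement_dvd_of_commute_conj {g x : G}
    (h : Commute (g * x * g⁻¹) x) : orderOf ⁅g, x⁆ ∣ orderOf x := by
  have := h.inv_right.orderOf_mul_dvd_lcm
  rwa [orderOf_inv, ← MulAut.conj_apply, MulEquiv.orderOf_eq, Nat.lcm_self] at this

theorem commute_conj_self_of_coprime_orderOf {k : ℕ}
    (hk : ∀ a b : G, a ^ k * b ^ k = b ^ k * a ^ k) {x : G} (hx : k.Coprime (orderOf x))
    (g : G) : Commute (g * x * g⁻¹) x := by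
  obtain ⟨t, ht⟩ := exists_pow_eq_self_of_coprime hx
  rw [pow_right_comm] at ht
  rw [← ht, ← conj_pow]
  exact hk _ _

theorem commute_of_coprime_orderOf {k l : ℕ}
    (hk : ∀ a b : G, a ^ k * b ^ k = b ^ k * a ^ k)
    (hl : ∀ a b : G, a ^ l * b ^ l = b ^ l * a ^ l) {a b : G}
    (ha : k.Coprime (orderOf a)) (hb : l.Coprime (orderOf b))
    (hab : (orderOf a).Coprime (orderOf b)) : Commute a b := by
  have dvd_a : orderOf ⁅b, a⁆ ∣ orderOf a :=
    orderOf_commutatorElement_dvd_of_commute_conj (commute_conj_self_of_coprime_orderOf hk ha b)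
  have dvd_b : orderOf ⁅b, a⁆ ∣ orderOf b := by
    rw [← commutatorElement_inv, orderOf_inv]
    exact orderOf_commutatorElement_dvd_of_commute_conj
      (commute_conj_self_of_coprime_orderOf hl hb a)
  have : ⁅b, a⁆ = 1 := orderOf_eq_one_iff.mp (Nat.eq_one_of_dvd_coprimes hab dvd_a dvd_b)
  exact (commutatorElement_eq_one_iff_commute.mp this).symm

end PowCommute

theorem prime_power_order_elements_commute (G : Type*) [Group G]
    (m n : ℕ) (hmn : Nat.Coprime m n)
    (hm : ∀ a b : G, a ^ m * b ^ m = b ^ m * a ^ m)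
    (hn : ∀ a b : G, a ^ n * b ^ n = b ^ n * a ^ n)
    (p q : ℕ) (hp : p.Prime) (hq : q.Prime) (hpq : p ≠ q)
    (a b : G) (α β : ℕ) (ha : orderOf a = p ^ α) (hb : orderOf b = q ^ β) :
    a * b = b * a := by
  have commuting_exponent : ∀ (g : G) (r e : ℕ), r.Prime → orderOf g = r ^ e →
      ∃ k, (∀ x y : G, x ^ k * y ^ k = y ^ k * x ^ k) ∧ k.Coprime (orderOf g) := by
    intro g r e hr hg
    rw [hg]
    rcases hmn.coprime_pow_or_coprime_pow hr e with h | h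
    exacts [⟨m, hm, h⟩, ⟨n, hn, h⟩]
  obtain ⟨k, hk, hak⟩ := commuting_exponent a p α hp ha
  obtain ⟨l, hl, hbl⟩ := commuting_exponent b q β hq hb
  refine commute_of_coprime_orderOf hk hl hak hbl ?_
  rw [ha, hb]
  exact ((Nat.coprime_primes hp hq).mpr hpq).pow α β
end

section
/- Let m, n be coprime natural numbers. Every locally finite group G satisfying aᵐbᵐ = bᵐaᵐ and aⁿbⁿ = bⁿaⁿ for all a, b ∈ G is abelian. -/
/-!
Let `A` and `B` be the subgroups generated by the `m`-th and by the `n`-th powers. Both are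
characteristic and abelian, and `A ⊔ B = G` by Bézout, so `G ⧸ A` is a quotient of `B` and `G ⧸ B`
one of `A`; hence `[G, G] ≤ A ⊓ B`, which commutes with `A ⊔ B = G`. In a group of nilpotency
class two, `⁅x ^ k, y ^ k⁆ = ⁅x, y⁆ ^ (k * k)`, so every commutator has order dividing both `m * m`
and `n * n`, and is therefore trivial.
-/

open Subgroup
open scoped commutatorElement

section

variable {G : Type*} [Group G]

theorem commutatorElement_pow_right {x y : G} (h : Commute ⁅x, y⁆ y) (l : ℕ) :
    ⁅x, y ^ l⁆ = ⁅x, y⁆ ^ l := by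
  have hconj : x * y * x⁻¹ = ⁅x, y⁆ * y := by rw [commutatorElement_def]; group
  rw [commutatorElement_def, ← conj_pow, hconj, h.mul_pow, mul_inv_cancel_right]

theorem commutatorElement_pow_left {x y : G} (h : Commute ⁅x, y⁆ x) (k : ℕ) :
    ⁅x ^ k, y⁆ = ⁅x, y⁆ ^ k := by
  have h' : Commute ⁅y, x⁆ x := by rw [← commutatorElement_inv]; exact h.inv_left
  rw [← commutatorElement_inv, commutatorElement_pow_right h', ← commutatorElement_inv, inv_pow,
    inv_inv]

theorem commutatorElement_pow_pow (hG : commutator G ≤ center G) (x y : G) (k l : ℕ) :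
    ⁅x ^ k, y ^ l⁆ = ⁅x, y⁆ ^ (k * l) := by
  have central (a b g : G) : Commute ⁅a, b⁆ g :=
    (mem_center_iff.mp (hG (commutator_mem_commutator (mem_top a) (mem_top b))) g).symm
  rw [commutatorElement_pow_right (central _ _ _), commutatorElement_pow_left (central _ _ _),
    pow_mul]

theorem inf_le_center_of_sup_eq_top {H K : Subgroup G} [IsMulCommutative H] [IsMulCommutative K]
    (hHK : H ⊔ K = ⊤) : H ⊓ K ≤ center G := by
  have : H ⊔ K ≤ centralizer (H ⊓ K : Subgroup G) :=
    sup_le (le_centralizer_iff.mp (inf_le_left.trans (le_centralizer _)))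
      (le_centralizer_iff.mp (inf_le_right.trans (le_centralizer _)))
  rwa [hHK, top_le_iff, centralizer_eq_top_iff_subset] at this

variable (G) in
def powClosure (k : ℕ) : Subgroup G := closure (Set.range fun g : G => g ^ k)

theorem pow_mem_powClosure (k : ℕ) (g : G) : g ^ k ∈ powClosure G k :=
  subset_closure ⟨g, rfl⟩

instance powClosure_characteristic (k : ℕ) : (powClosure G k).Characteristic := by
  refine characteristic_iff_map_le.mpr fun φ => ?_
  rw [powClosure, MonoidHom.map_closure]
  refine closure_mono ?_
  rintro _ ⟨_, ⟨g, rfl⟩, rfl⟩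
  exact ⟨φ g, (map_pow φ g k).symm⟩

theorem isMulCommutative_powClosure {k : ℕ} (hk : ∀ a b : G, a ^ k * b ^ k = b ^ k * a ^ k) :
    IsMulCommutative (powClosure G k) :=
  isMulCommutative_closure <| by rintro _ ⟨a, rfl⟩ _ ⟨b, rfl⟩; exact hk a b

theorem powClosure_sup_eq_top {m n : ℕ} (hmn : Nat.Coprime m n) :
    powClosure G m ⊔ powClosure G n = ⊤ := by
  refine eq_top_iff.mpr fun g _ => ?_
  have hg : g = (g ^ m.gcdA n) ^ m * (g ^ m.gcdB n) ^ n := by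
    rw [← zpow_natCast, ← zpow_natCast, ← zpow_mul, ← zpow_mul, ← zpow_add, mul_comm,
      mul_comm (m.gcdB n), ← Nat.gcd_eq_gcd_ab, hmn, Nat.cast_one, zpow_one]
  rw [hg]
  exact mul_mem_sup (pow_mem_powClosure m _) (pow_mem_powClosure n _)

theorem commutator_le_center_of_pow_commute {m n : ℕ} (hmn : Nat.Coprime m n)
    (hm : ∀ a b : G, a ^ m * b ^ m = b ^ m * a ^ m)
    (hn : ∀ a b : G, a ^ n * b ^ n = b ^ n * a ^ n) :
    commutator G ≤ center G := by
  have hAB := powClosure_sup_eq_top (G := G) hmn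
  have hBA : powClosure G n ⊔ powClosure G m = ⊤ := sup_comm (powClosure G m) _ ▸ hAB
  have := isMulCommutative_powClosure hm
  have := isMulCommutative_powClosure hn
  calc commutator G ≤ powClosure G m ⊓ powClosure G n :=
        le_inf (Normal.commutator_le_of_self_sup_commutative_eq_top hAB inferInstance)
          (Normal.commutator_le_of_self_sup_commutative_eq_top hBA inferInstance)
    _ ≤ center G := inf_le_center_of_sup_eq_top hAB

end

theorem locally_finite_abelian_of_coprime_powers_commute_general (G : Type*) [Group G]
    (m n : ℕ) (hmn : Nat.Coprime m n)
    (hm : ∀ a b : G, a ^ m * b ^ m = b ^ m * a ^ m)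
    (hn : ∀ a b : G, a ^ n * b ^ n = b ^ n * a ^ n) :
    ∀ a b : G, a * b = b * a := by
  have hcentral := commutator_le_center_of_pow_commute hmn hm hn
  intro a b
  have hpow (k : ℕ) (hk : ∀ a b : G, a ^ k * b ^ k = b ^ k * a ^ k) : ⁅a, b⁆ ^ (k * k) = 1 := by
    rw [← commutatorElement_pow_pow hcentral, commutatorElement_eq_one_iff_mul_comm]
    exact hk a b
  have hcop : Nat.Coprime (m * m) (n * n) :=
    Nat.Coprime.mul_left (hmn.mul_right hmn) (hmn.mul_right hmn)
  rw [← commutatorElement_eq_one_iff_mul_comm, ← pow_one ⁅a, b⁆, ← hcop.gcd_eq_one]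
  exact pow_gcd_eq_one.mpr ⟨hpow m hm, hpow n hn⟩

theorem locally_finite_abelian_of_coprime_powers_commute (G : Type*) [Group G]
    (m n : ℕ) (hmn : Nat.Coprime m n)
    (hloc : ∀ S : Subgroup G, S.FG → Finite S)
    (hm : ∀ a b : G, a ^ m * b ^ m = b ^ m * a ^ m)
    (hn : ∀ a b : G, a ^ n * b ^ n = b ^ n * a ^ n) :
    ∀ a b : G, a * b = b * a :=
  locally_finite_abelian_of_coprime_powers_commute_general G m n hmn hm hn
end
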